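/- Let T : H → H be a bounded operator on a complex Hilbert space with conjugation C, and suppose T is self-transpose, i.e., C T* C = T. Then if T is Fredholm, Index(T) = 0. -/

import Mathlib

open Module

/-- The Fredholm index: dim ker − dim coker. -/
noncomputable def fredholmIndex {H : Type*} [NormedAddCommGroup H] [InnerProductSpace ℂ H]
    (P : H →L[ℂ] H) : ℤ :=
  (finrank ℂ (LinearMap.ker (P : H →ₗ[ℂ] H)) : ℤ) - (finrank ℂ (H ⧸ LinearMap.range (P : H →ₗ[ℂ] H)) : ℤ)

/-- A bounded operator is Fredholm if its kernel and cokernel are finite dimensional. -/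
def IsFredholm {H : Type*} [NormedAddCommGroup H] [InnerProductSpace ℂ H]
    (P : H →L[ℂ] H) : Prop :=
  FiniteDimensional ℂ (LinearMap.ker (P : H →ₗ[ℂ] H)) ∧ FiniteDimensional ℂ (H ⧸ LinearMap.range (P : H →ₗ[ℂ] H))

/-!
The conjugation `C` is a conjugate-linear bijection with `C T* = T C`, so it carries `ker T*` onto
`ker T`, and the two kernels have the same complex dimension. On the other hand a bounded operator
with finite-dimensional cokernel has closed range (apply the open mapping theorem to the injective
map it induces on `H ⧸ ker T`), hence `H ⧸ range T ≃ (range T)ᗮ = ker T*`. Thus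
`dim coker T = dim ker T* = dim ker T`.
-/

namespace LinearEquiv

variable {R R₂ M M₂ : Type*} [Ring R] [Ring R₂] [AddCommGroup M] [AddCommGroup M₂]
  [Module R M] [Module R₂ M₂] {σ : R →+* R₂} {σ' : R₂ →+* R}
  [RingHomInvPair σ σ'] [RingHomInvPair σ' σ]

theorem finrank_eq_of_semilinear (e : M ≃ₛₗ[σ] M₂) : finrank R M = finrank R₂ M₂ := by
  have hσ : Function.Bijective σ :=
    Function.bijective_iff_has_inverse.mpr
      ⟨σ', fun _ ↦ RingHomInvPair.comp_apply_eq, fun _ ↦ RingHomInvPair.comp_apply_eq₂⟩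
  have h := congrArg Cardinal.toNat (lift_rank_eq_of_equiv_equiv σ e.toAddEquiv hσ e.map_smulₛₗ)
  rwa [Cardinal.toNat_lift, Cardinal.toNat_lift] at h

theorem finrank_ker_eq_of_semiconj (e : M ≃ₛₗ[σ] M₂) {f : M →ₗ[R] M} {g : M₂ →ₗ[R₂] M₂}
    (h : ∀ x, e (f x) = g (e x)) : finrank R (LinearMap.ker f) = finrank R₂ (LinearMap.ker g) := by
  have hker : (LinearMap.ker f).map (e : M →ₛₗ[σ] M₂) = LinearMap.ker g := by
    ext y
    rw [Submodule.map_equiv_eq_comap_symm, Submodule.mem_comap, LinearMap.mem_ker,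
      LinearMap.mem_ker, ← e.map_eq_zero_iff, LinearEquiv.coe_coe, h, e.apply_symm_apply]
  exact hker ▸ finrank_eq_of_semilinear (e.submoduleMap _)

end LinearEquiv

namespace ContinuousLinearMap

section Banach

variable {𝕜 E F : Type*} [NontriviallyNormedField 𝕜] [CompleteSpace 𝕜]
  [NormedAddCommGroup E] [NormedSpace 𝕜 E] [CompleteSpace E]
  [NormedAddCommGroup F] [NormedSpace 𝕜 F] [CompleteSpace F]

theorem isClosed_range_of_finiteDimensional_quotient (T : E →L[𝕜] F)
    [FiniteDimensional 𝕜 (F ⧸ T.range)] : IsClosed (T.range : Set F) := by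
  obtain ⟨G, hG⟩ := T.range.exists_isCompl
  have : FiniteDimensional 𝕜 G := (T.range.quotientEquivOfIsCompl G hG).finiteDimensional
  -- needed for the normed structure on `E ⧸ T.ker`
  have : IsClosed (T.ker : Set E) := T.isClosed_ker
  let S : (E ⧸ T.ker) →L[𝕜] F := T.ker.liftQL T le_rfl
  have hrange : S.range = T.range := Submodule.range_liftQ _ _ _
  have hker : S.ker = ⊥ := Submodule.ker_liftQ_eq_bot' _ _ rfl
  rw [← hrange] at hG ⊢
  exact closed_complemented_range_of_isCompl_of_ker_eq_bot S G hG G.closed_of_finiteDimensional hker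

end Banach

section Hilbert

variable {𝕜 E F : Type*} [RCLike 𝕜]
  [NormedAddCommGroup E] [InnerProductSpace 𝕜 E] [CompleteSpace E]
  [NormedAddCommGroup F] [InnerProductSpace 𝕜 F] [CompleteSpace F]

theorem finrank_quotient_range_eq_finrank_ker_adjoint (T : E →L[𝕜] F)
    [FiniteDimensional 𝕜 (F ⧸ T.range)] : finrank 𝕜 (F ⧸ T.range) = finrank 𝕜 (adjoint T).ker := by
  have : CompleteSpace T.range := T.isClosed_range_of_finiteDimensional_quotient.completeSpace_coe
  rw [T.range.quotientEquivOrthogonal.toLinearEquiv.finrank_eq, T.orthogonal_range]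

end Hilbert

end ContinuousLinearMap

theorem selfTranspose_index_zero_general {H : Type*} [NormedAddCommGroup H]
    [InnerProductSpace ℂ H] [CompleteSpace H]
    (C : H → H)
    (hC_add : ∀ x y, C (x + y) = C x + C y)
    (hC_smul : ∀ (a : ℂ) (x : H), C (a • x) = (starRingEnd ℂ) a • C x)
    (hC_invol : ∀ x, C (C x) = x)
    (T : H →L[ℂ] H)
    (hself : ∀ x, C (ContinuousLinearMap.adjoint T (C x)) = T x)
    (hT : IsFredholm T) :
    fredholmIndex T = 0 := by
  obtain ⟨-, hcoker⟩ := hT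
  let conj : H ≃ₛₗ[starRingEnd ℂ] H := .ofInvolutive ⟨⟨C, hC_add⟩, hC_smul⟩ hC_invol
  have hker : finrank ℂ (ContinuousLinearMap.adjoint T).ker = finrank ℂ T.ker :=
    conj.finrank_ker_eq_of_semiconj fun x ↦ by
      have := hself (C x)
      rwa [hC_invol] at this
  rw [fredholmIndex, T.finrank_quotient_range_eq_finrank_ker_adjoint, hker, sub_self]

/-- If `T` is self-transpose, `C T* C = T`, and Fredholm, then `Index T = 0`. -/
theorem selfTranspose_index_zero {H : Type*} [NormedAddCommGroup H]
    [InnerProductSpace ℂ H] [CompleteSpace H]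
    (C : H → H)
    (hC_add : ∀ x y, C (x + y) = C x + C y)
    (hC_smul : ∀ (a : ℂ) (x : H), C (a • x) = (starRingEnd ℂ) a • C x)
    (hC_isom : ∀ x, ‖C x‖ = ‖x‖)
    (hC_invol : ∀ x, C (C x) = x)
    (T : H →L[ℂ] H)
    (hself : ∀ x, C (ContinuousLinearMap.adjoint T (C x)) = T x)
    (hT : IsFredholm T) :
    fredholmIndex T = 0 :=
  selfTranspose_index_zero_general C hC_add hC_smul hC_invol T hself hT
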